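/- arXiv:1001.1126 — 2 statements merged into one kernel-verified Lean document; each statement's English description precedes it below -/
import Mathlib

section
/- The polynomials g_1 = 2X_0 + X_4, g_2 = -3X_1 + X_3, g_3 = X_2 + 5X_5, g_4 = 2X_0 + X_5 have no common zero on the variety defined by J = (X_3^2 - X_2X_4, X_2X_3 - X_1X_4, X_2^2 - X_1X_3, X_1^2 - X_0X_5) other than the origin; equivalently, the ideal J + (g_1, g_2, g_3, g_4) in Q[X_0,...,X_5] contains a power of the irrelevant ideal (X_0,...,X_5). -/
/-!
Every `X_i ^ 2` already lies in `J + G`. Modulo the linear forms, `X_4 ≡ X_5 ≡ -2 X_0`,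
`X_3 ≡ 3 X_1` and `X_2 ≡ 10 X_0`, so the binomials `X_3² - X_2X_4` and `X_1² - X_0X_5` become
`9 X_1² + 20 X_0²` and `X_1² + 2 X_0²`; nine times the second minus the first is `-2 X_0²`, and
each remaining variable is congruent to a multiple of `X_0` or `X_1`.
-/

theorem Ideal.exists_pow_span_range_le_of_forall_pow_mem {R ι : Type*} [CommRing R] [Finite ι]
    {K : Ideal R} {v : ι → R} (n : ℕ) (h : ∀ i, v i ^ n ∈ K) :
    ∃ k : ℕ, Ideal.span (Set.range v) ^ k ≤ K :=
  Ideal.exists_pow_le_of_le_radical_of_fg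
    (Ideal.span_le.2 (Set.range_subset_iff.2 fun i => ⟨n, h i⟩))
    (Submodule.fg_span (Set.finite_range v))

theorem sq_eq_zero_of_binomials_of_linear_forms {S : Type*} [CommRing S] (two : IsUnit (2 : S))
    {y : Fin 6 → S} (b₁ : y 3 ^ 2 - y 2 * y 4 = 0) (b₄ : y 1 ^ 2 - y 0 * y 5 = 0)
    (g₁ : 2 * y 0 + y 4 = 0) (g₂ : -3 * y 1 + y 3 = 0) (g₃ : y 2 + 5 * y 5 = 0)
    (g₄ : 2 * y 0 + y 5 = 0) (i : Fin 6) : y i ^ 2 = 0 := by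
  have h₀ : y 0 ^ 2 = 0 := two.mul_right_eq_zero.1 <| by
    linear_combination b₁ - 9 * b₄ + y 2 * g₁ + (-3 * y 1 - y 3) * g₂ - 2 * y 0 * g₃ + y 0 * g₄
  have h₁ : y 1 ^ 2 = 0 := by linear_combination b₄ + y 0 * g₄ - 2 * h₀
  have h₅ : y 5 ^ 2 = 0 := by linear_combination (y 5 - 2 * y 0) * g₄ + 4 * h₀
  match i with
  | 0 => exact h₀
  | 1 => exact h₁
  | 2 => linear_combination (y 2 - 5 * y 5) * g₃ + 25 * h₅
  | 3 => linear_combination (y 3 + 3 * y 1) * g₂ + 9 * h₁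
  | 4 => linear_combination (y 4 - 2 * y 0) * g₁ + 4 * h₀
  | 5 => exact h₅

/-- In `ℚ[X_0,…,X_5]`, the ideal `J + (g_1,g_2,g_3,g_4)` contains a power of the
irrelevant ideal `(X_0,…,X_5)`, where `J` is the toric ideal
`(X_3² - X_2X_4, X_2X_3 - X_1X_4, X_2² - X_1X_3, X_1² - X_0X_5)` and
`g_1 = 2X_0 + X_4`, `g_2 = -3X_1 + X_3`, `g_3 = X_2 + 5X_5`, `g_4 = 2X_0 + X_5`.
Equivalently, the `g_i` have no common zero on `V(J)` other than the origin. -/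
theorem toric_basepoint_free :
    let R := MvPolynomial (Fin 6) ℚ
    let x : Fin 6 → R := MvPolynomial.X
    let J : Ideal R := Ideal.span
      {x 3 ^ 2 - x 2 * x 4, x 2 * x 3 - x 1 * x 4,
       x 2 ^ 2 - x 1 * x 3, x 1 ^ 2 - x 0 * x 5}
    let G : Ideal R := Ideal.span
      {2 * x 0 + x 4, -3 * x 1 + x 3, x 2 + 5 * x 5, 2 * x 0 + x 5}
    let I : Ideal R := Ideal.span (Set.range x)
    ∃ k : ℕ, I ^ k ≤ J ⊔ G := by
  intro R x J G I
  let π := Ideal.Quotient.mk (J ⊔ G)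
  have two : IsUnit (2 : R ⧸ J ⊔ G) := by
    simpa only [map_ofNat] using (isUnit_of_invertible (2 : ℚ)).map (algebraMap ℚ (R ⧸ J ⊔ G))
  refine Ideal.exists_pow_span_range_le_of_forall_pow_mem 2 fun i => ?_
  rw [← Ideal.Quotient.eq_zero_iff_mem, map_pow]
  refine sq_eq_zero_of_binomials_of_linear_forms two (y := π ∘ x) ?_ ?_ ?_ ?_ ?_ ?_ i
  all_goals
    simp only [Function.comp_apply, ← map_pow, ← map_mul, ← map_ofNat π, ← map_neg, ← map_sub,
      ← map_add]
    refine Ideal.Quotient.eq_zero_iff_mem.2 ?_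
  iterate 2 exact Ideal.mem_sup_left (Ideal.subset_span (by simp))
  all_goals exact Ideal.mem_sup_right (Ideal.subset_span (by simp))
end

section
/- The polynomial F of degree 6 listed in the example (the implicit equation) is irreducible over Q. -/
open MvPolynomial

/-- The degree-6 implicit equation of Example 2.1. -/
noncomputable def implicitF : MvPolynomial (Fin 4) ℚ :=
  let T1 : MvPolynomial (Fin 4) ℚ := MvPolynomial.X 0
  let T2 : MvPolynomial (Fin 4) ℚ := MvPolynomial.X 1
  let T3 : MvPolynomial (Fin 4) ℚ := MvPolynomial.X 2
  let T4 : MvPolynomial (Fin 4) ℚ := MvPolynomial.X 3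
  2809*T1^2*T2^4 + 124002*T2^6 - 5618*T1^3*T2^2*T3 + 66816*T1*T2^4*T3
  + 2809*T1^4*T3^2 - 50580*T1^2*T2^2*T3^2 + 86976*T2^4*T3^2 + 212*T1^3*T3^3
  - 14210*T1*T2^2*T3^3 + 3078*T1^2*T3^4 + 13632*T2^2*T3^4 + 116*T1*T3^5
  + 841*T3^6 + 14045*T1^3*T2^2*T4 - 169849*T1*T2^4*T4 - 14045*T1^4*T3*T4
  + 261327*T1^2*T2^2*T3*T4 - 468288*T2^4*T3*T4 - 7208*T1^3*T3^2*T4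
  + 157155*T1*T2^2*T3^3*T4 - 31098*T1^2*T3^3*T4 - 129215*T2^2*T3^3*T4
  - 4528*T1*T3^4*T4 - 12673*T3^5*T4 - 16695*T1^2*T2^2*T4^2 + 169600*T2^4*T4^2
  + 30740*T1^3*T3*T4^2 - 433384*T1*T2^2*T3*T4^2 + 82434*T1^2*T3^2*T4^2
  + 269745*T2^2*T3^2*T4^2 + 36696*T1*T3^3*T4^2 + 63946*T3^4*T4^2
  + 2775*T1*T2^2*T4^3 - 19470*T1^2*T3*T4^4 + 177675*T2^2*T3*T4^3
  - 85360*T1*T3^2*T4^3 - 109490*T3^3*T4^3 - 125*T2^2*T4^4 + 2900*T1*T3*T4^4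
  + 7325*T3^2*T4^4 - 125*T3*T4^5

/-!
Regard `implicitF` as a polynomial in `T2` over `ℚ[T1, T3, T4]`. Its leading coefficient is the
constant `124002`, a unit, so a factorisation of `implicitF` into non-units survives every
specialisation of `T1, T3, T4`. At `(T1, T3, T4) = (1, -2, -2)` it becomes the integer polynomial
`implicitFSpecialization`, which is Eisenstein at `7`.
-/

namespace Polynomial

theorem irreducible_of_irreducible_map_of_isUnit_leadingCoeff {R S : Type*} [CommRing R]
    [IsDomain R] [CommRing S] [IsDomain S] (φ : R →+* S) {f : R[X]}
    (hf : IsUnit f.leadingCoeff) (h_irr : Irreducible (f.map φ)) : Irreducible f := by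
  obtain ⟨u, hu⟩ := hf
  have h_monic : (C (↑u⁻¹ : R) * f).Monic :=
    monic_C_mul_of_mul_leadingCoeff_eq_one (by rw [← hu, Units.inv_mul])
  have hf_eq : f = C (u : R) * (C (↑u⁻¹ : R) * f) := by
    rw [← mul_assoc, ← C_mul, Units.mul_inv, C_1, one_mul]
  rw [hf_eq, irreducible_isUnit_mul (isUnit_C.mpr u.isUnit)]
  refine h_monic.irreducible_of_irreducible_map φ _ ?_
  rwa [Polynomial.map_mul, map_C, irreducible_isUnit_mul (isUnit_C.mpr (u⁻¹.isUnit.map φ))]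

end Polynomial

noncomputable def implicitFSpecialization : Polynomial ℤ :=
  Polynomial.C 124002 * Polynomial.X ^ 6 - Polynomial.C 637973 * Polynomial.X ^ 4
    + Polynomial.C 12139778 * Polynomial.X ^ 2 - Polynomial.C 346864

namespace implicitFSpecialization

open Polynomial

theorem isPrimitive : implicitFSpecialization.IsPrimitive := by
  intro r hr
  rw [Polynomial.C_dvd_iff_dvd_coeff] at hr
  have h6 := hr 6
  have h4 := hr 4
  simp [implicitFSpecialization] at h6 h4
  have h_dvd_gcd := Int.dvd_coe_gcd h6 h4
  rw [show Int.gcd 124002 637973 = 1 by norm_num] at h_dvd_gcd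
  exact isUnit_of_dvd_one (by exact_mod_cast h_dvd_gcd)

theorem degree_eq : implicitFSpecialization.degree = 6 := by
  unfold implicitFSpecialization
  compute_degree!

theorem irreducible : Irreducible implicitFSpecialization := by
  apply irreducible_of_eisenstein_criterion (P := Ideal.span {(7 : ℤ)})
  · rw [Ideal.span_singleton_prime (by norm_num)]
    norm_num
  · rw [leadingCoeff, natDegree_eq_of_degree_eq_some degree_eq]
    simp [implicitFSpecialization, Ideal.mem_span_singleton]
  · rw [degree_eq]
    intro n hn
    have hn : n < 6 := by exact_mod_cast hn
    interval_cases n <;>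
      simp [implicitFSpecialization, Ideal.mem_span_singleton]
  · rw [degree_eq]
    norm_num
  · rw [Ideal.span_singleton_pow, Ideal.mem_span_singleton]
    simp [implicitFSpecialization]
  · exact isPrimitive

theorem irreducible_map_cast : Irreducible (implicitFSpecialization.map (Int.castRingHom ℚ)) :=
  (IsPrimitive.Int.irreducible_iff_irreducible_map_cast isPrimitive).mp irreducible

end implicitFSpecialization

noncomputable def polynomialInT2 :
    MvPolynomial (Fin 4) ℚ ≃ₐ[ℚ] Polynomial (MvPolynomial (Fin 3) ℚ) :=
  (renameEquiv ℚ (Equiv.swap (0 : Fin 4) 1)).trans (finSuccEquiv ℚ 3)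

theorem polynomialInT2_X_zero : polynomialInT2 (X 0) = Polynomial.C (X 0) := by
  rw [polynomialInT2, AlgEquiv.trans_apply, renameEquiv_apply, rename_X,
    show Equiv.swap (0 : Fin 4) 1 0 = Fin.succ 0 by decide, finSuccEquiv_X_succ]

theorem polynomialInT2_X_one : polynomialInT2 (X 1) = Polynomial.X := by
  rw [polynomialInT2, AlgEquiv.trans_apply, renameEquiv_apply, rename_X,
    show Equiv.swap (0 : Fin 4) 1 1 = 0 by decide, finSuccEquiv_X_zero]

theorem polynomialInT2_X_two : polynomialInT2 (X 2) = Polynomial.C (X 1) := by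
  rw [polynomialInT2, AlgEquiv.trans_apply, renameEquiv_apply, rename_X,
    show Equiv.swap (0 : Fin 4) 1 2 = Fin.succ 1 by decide, finSuccEquiv_X_succ]

theorem polynomialInT2_X_three : polynomialInT2 (X 3) = Polynomial.C (X 2) := by
  rw [polynomialInT2, AlgEquiv.trans_apply, renameEquiv_apply, rename_X,
    show Equiv.swap (0 : Fin 4) 1 3 = Fin.succ 2 by decide, finSuccEquiv_X_succ]

theorem degree_polynomialInT2_implicitF_sub_le :
    (polynomialInT2 implicitF - 124002 * Polynomial.X ^ 6).degree ≤ 4 := by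
  simp only [implicitF, map_add, map_sub, map_mul, map_pow, map_ofNat, polynomialInT2_X_zero,
    polynomialInT2_X_one, polynomialInT2_X_two, polynomialInT2_X_three]
  ring_nf
  compute_degree

theorem map_eval_polynomialInT2_implicitF :
    (polynomialInT2 implicitF).map (eval ![1, -2, -2]) =
      implicitFSpecialization.map (Int.castRingHom ℚ) := by
  simp [implicitF, implicitFSpecialization, polynomialInT2_X_zero, polynomialInT2_X_one,
    polynomialInT2_X_two, polynomialInT2_X_three, map_ofNat]
  ring

theorem leadingCoeff_polynomialInT2_implicitF :
    (polynomialInT2 implicitF).leadingCoeff = C 124002 := by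
  have h_top : (124002 * Polynomial.X ^ 6 : Polynomial (MvPolynomial (Fin 3) ℚ)).degree = 6 := by
    compute_degree!
  rw [← add_sub_cancel (124002 * Polynomial.X ^ 6) (polynomialInT2 implicitF),
    Polynomial.leadingCoeff_add_of_degree_lt', ← map_ofNat Polynomial.C,
    Polynomial.leadingCoeff_C_mul_X_pow, map_ofNat]
  · rw [h_top]
    exact degree_polynomialInT2_implicitF_sub_le.trans_lt (by decide)

/-- The degree-6 implicit equation of Example 2.1 is irreducible over `ℚ`. -/
theorem implicitF_irreducible : Irreducible implicitF := by
  have h_unit : IsUnit (polynomialInT2 implicitF).leadingCoeff := by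
    rw [leadingCoeff_polynomialInT2_implicitF]
    exact (isUnit_iff_ne_zero.mpr (by norm_num : (124002 : ℚ) ≠ 0)).map C
  have h_spec : Irreducible ((polynomialInT2 implicitF).map (eval ![1, -2, -2])) := by
    rw [map_eval_polynomialInT2_implicitF]
    exact implicitFSpecialization.irreducible_map_cast
  exact (MulEquiv.irreducible_iff polynomialInT2).mp
    (Polynomial.irreducible_of_irreducible_map_of_isUnit_leadingCoeff _ h_unit h_spec)
end
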